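/- arXiv:2010.10464 — 3 statements merged into one kernel-verified Lean document; each statement's English description precedes it below -/
import Mathlib

section
/- Assume ε ≥ 1, 𝓚 is nonempty, |X_k| = Z for every k ∈ 𝓚 with Z ≥ 2ε + 1, and every subfile index f ∈ 𝓕 belongs to X_k for at least one k ∈ 𝓚. Then ℓ*(X,ε) ≥ 2ε, with equality if and only if Z = F. -/
/-!
A valid encoder is exactly a matrix `H` such that, for every node `k`, two updates `e, e'` of
weight `≤ ε` applied to files `w, w'` that agree on `X k` are told apart on `X k` by their
codewords. Splitting a vector supported on `2ε` cached positions into two halves of weight `≤ ε`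
shows that every `2ε` columns of `H` indexed by `X k` are linearly independent, so `2ε ≤ ℓ`. If
some subfile `f₀` is missing from `X k`, the vector `e_{f₀}` looks like side information to node
`k`, so the column of `f₀` is independent of those `2ε` columns as well; it is nonzero because
`f₀` is cached somewhere. Conversely, when every node caches everything, a Reed–Solomon
(Vandermonde) matrix with `2ε` rows, whose every `2ε` columns are independent, is a valid encoder.
-/

open Matrix Finset

/-- `H` is a valid encoder for the `(X, ε)` cache update problem: for every node `k`
there is a decoder `D_k` recovering `(w+e)|_{X_k}` from the codeword `H(w+e)` and the
side information `w|_{X_k}`, for all `w` and all updates `e` of Hamming weight at most `ε`. -/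
def ValidEncoder {𝓕 𝓚 : Type} [Fintype 𝓕] (F : Type) [Field F] [Fintype F]
    (X : 𝓚 → Finset 𝓕) (ε : ℕ) {l : ℕ} (H : Matrix (Fin l) 𝓕 F) : Prop :=
  ∀ k : 𝓚, ∃ D : (Fin l → F) → ({f // f ∈ X k} → F) → ({f // f ∈ X k} → F),
    ∀ w e : 𝓕 → F, {f | e f ≠ 0}.ncard ≤ ε →
      D (H.mulVec (w + e)) (fun f => w f.1) = fun f => (w + e) f.1

/-- The optimal codelength `ℓ*(X, ε)`: the least `l` for which some finite field `F`
admits a valid encoder `H ∈ F^{l×F}` for the `(X, ε)` cache update problem. -/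
noncomputable def optLen {𝓕 𝓚 : Type} [Fintype 𝓕] (X : 𝓚 → Finset 𝓕) (ε : ℕ) : ℕ :=
  sInf {l : ℕ | ∃ (F : Type) (inst1 : Field F) (inst2 : Fintype F)
    (H : Matrix (Fin l) 𝓕 F), @ValidEncoder 𝓕 𝓚 _ F inst1 inst2 X ε l H}

open Function

section Weight

variable {α R : Type*}

lemma ncard_support_le_card_of_subset [Zero R] {u : α → R} {T : Finset α}
    (h : support u ⊆ T) : (support u).ncard ≤ T.card :=
  (Set.ncard_le_ncard h).trans_eq (Set.ncard_coe_finset T)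

lemma ncard_support_sub_le [Finite α] [AddGroup R] (u v : α → R) :
    (support (u - v)).ncard ≤ (support u).ncard + (support v).ncard :=
  (Set.ncard_le_ncard (support_sub u v)).trans (Set.ncard_union_le _ _)

end Weight

theorem eq_zero_of_forall_sum_mul_pow_eq_zero {ι R : Type*} [Fintype ι] [CommRing R] [IsDomain R]
    {x : ι → R} (hx : Injective x) {c : ι → R} {n : ℕ} (hc : (support c).ncard ≤ n)
    (h : ∀ i < n, ∑ t, c t * x t ^ i = 0) : c = 0 := by
  classical
  set T := (support c).toFinset
  let e := T.equivFin
  have hT : T.card ≤ n := by rwa [← Set.ncard_eq_toFinset_card']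
  have hsum (i : ℕ) : ∑ j, c (e.symm j) * x (e.symm j) ^ i = ∑ t, c t * x t ^ i := by
    rw [e.symm.sum_comp (fun t : T => c t * x t ^ i), T.sum_coe_sort (fun t => c t * x t ^ i)]
    exact Finset.sum_subset (subset_univ T) fun t _ ht => by simp_all [T]
  have hv := Matrix.eq_zero_of_forall_pow_sum_mul_pow_eq_zero
    (hx.comp (Subtype.val_injective.comp e.symm.injective))
    fun i => (hsum i).trans (h i (i.2.trans_le hT))
  funext t
  by_contra ht
  exact ht (by simpa using congrFun hv (e ⟨t, by simpa [T] using ht⟩))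

theorem exists_matrix_sparse_ker_trivial (𝓕 : Type) [Fintype 𝓕] (m : ℕ) :
    ∃ (F : Type) (_ : Field F) (_ : Fintype F) (H : Matrix (Fin m) 𝓕 F),
      ∀ u : 𝓕 → F, (support u).ncard ≤ m → H *ᵥ u = 0 → u = 0 := by
  obtain ⟨p, hp_gt, hp⟩ := Nat.exists_infinite_primes (Fintype.card 𝓕 + 1)
  have := Fact.mk hp
  obtain ⟨α⟩ := Embedding.nonempty_of_card_le
    (show Fintype.card 𝓕 ≤ Fintype.card (ZMod p) by rw [ZMod.card]; omega)
  refine ⟨ZMod p, inferInstance, inferInstance, fun i f => α f ^ (i : ℕ), fun u hu h0 => ?_⟩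
  exact eq_zero_of_forall_sum_mul_pow_eq_zero α.injective hu fun i hi => by
    simpa [mulVec, dotProduct, mul_comm] using congrFun h0 ⟨i, hi⟩

theorem Matrix.card_le_of_support_subset_of_mulVec_eq_zero {𝓕 F : Type} [Fintype 𝓕] [Field F]
    {l : ℕ} (H : Matrix (Fin l) 𝓕 F) (T : Finset 𝓕)
    (h : ∀ u : 𝓕 → F, support u ⊆ T → H *ᵥ u = 0 → u = 0) : T.card ≤ l := by
  let φ := H.mulVecLin ∘ₗ ExtendByZero.linearMap F ((↑) : T → 𝓕)
  have hφ : Injective φ := by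
    rw [← LinearMap.ker_eq_bot, LinearMap.ker_eq_bot']
    intro g hg
    have hsupp : support (extend ((↑) : T → 𝓕) g 0) ⊆ T := fun f hf => by
      by_contra hfT
      exact hf (extend_apply' _ _ _ fun ⟨t, ht⟩ => hfT (ht ▸ t.2))
    have hu := h _ hsupp hg
    funext t
    simpa [Subtype.val_injective.extend_apply] using congrFun hu t
  simpa using LinearMap.finrank_le_finrank_of_injective hφ

section ValidEncoder

variable {𝓕 𝓚 : Type} [Fintype 𝓕] {F : Type} [Field F] [Fintype F]
  {X : 𝓚 → Finset 𝓕} {ε l : ℕ} {H : Matrix (Fin l) 𝓕 F}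

theorem validEncoder_iff : ValidEncoder F X ε H ↔
    ∀ (k : 𝓚) (w w' e e' : 𝓕 → F), (support e).ncard ≤ ε → (support e').ncard ≤ ε →
      Set.EqOn w w' (X k) → H *ᵥ (w + e) = H *ᵥ (w' + e') → Set.EqOn e e' (X k) := by
  constructor
  · rintro hH k w w' e e' he he' hw hsyn f hf
    obtain ⟨D, hD⟩ := hH k
    have hside : (fun f : X k => w f.1) = fun f => w' f.1 := funext fun f => hw f.2
    have := congrFun ((hD w e he).symm.trans (hsyn ▸ hside ▸ hD w' e' he')) ⟨f, hf⟩
    simpa [hw hf] using this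
  · intro h k
    let code (p : {p : (𝓕 → F) × (𝓕 → F) // (support p.2).ncard ≤ ε}) :
        (Fin l → F) × (X k → F) := (H *ᵥ (p.1.1 + p.1.2), fun f => p.1.1 f.1)
    let decoded (p : {p : (𝓕 → F) × (𝓕 → F) // (support p.2).ncard ≤ ε}) (f : X k) : F :=
      (p.1.1 + p.1.2) f.1
    have hfac : FactorsThrough decoded code := by
      rintro ⟨⟨w, e⟩, he⟩ ⟨⟨w', e'⟩, he'⟩ hcode
      obtain ⟨hsyn, hside⟩ := Prod.ext_iff.mp hcode
      funext f
      have hw (f : 𝓕) (hf : f ∈ X k) : w f = w' f := congrFun hside ⟨f, hf⟩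
      simp [decoded, hw f f.2, h k w w' e e' he he' hw hsyn f.2]
    exact ⟨fun s a => extend code decoded 0 (s, a), fun w e he => hfac.extend_apply 0 ⟨(w, e), he⟩⟩

theorem validEncoder_of_injective (hH : Injective H.mulVec) : ValidEncoder F X ε H :=
  validEncoder_iff.mpr fun _ w w' e e' _ _ hw hsyn f hf => by
    simpa [hw hf] using congrFun (hH hsyn) f

theorem validEncoder_of_eq_univ (hX : ∀ k, X k = univ)
    (hH : ∀ u : 𝓕 → F, (support u).ncard ≤ 2 * ε → H *ᵥ u = 0 → u = 0) :
    ValidEncoder F X ε H :=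
  validEncoder_iff.mpr fun k w w' e e' he he' hw hsyn f _ => by
    obtain rfl : w = w' := funext fun f => hw (by simp [hX k])
    have hker : H *ᵥ (e - e') = 0 := by
      rw [mulVec_sub, sub_eq_zero]
      simpa [mulVec_add] using hsyn
    exact sub_eq_zero.mp (congrFun (hH _ ((ncard_support_sub_le e e').trans (by omega)) hker) f)

theorem ValidEncoder.eq_zero_of_mulVec_eq (hH : ValidEncoder F X ε H) {k : 𝓚} {S : Finset 𝓕}
    (hSX : S ⊆ X k) (hS : S.card ≤ 2 * ε) {v d : 𝓕 → F} (hv : support v ⊆ S)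
    (hd : ∀ f ∈ X k, d f = 0) (hvd : H *ᵥ v = H *ᵥ d) : v = 0 := by
  classical
  obtain ⟨S₁, hS₁S, hS₁⟩ := exists_subset_card_eq (show S.card - ε ≤ S.card by omega)
  set v₁ := (S₁ : Set 𝓕).indicator v
  set v₂ := (S₁ : Set 𝓕)ᶜ.indicator v
  have hv₁ : (support v₁).ncard ≤ ε :=
    (ncard_support_le_card_of_subset Set.support_indicator_subset).trans (by omega)
  have hv₂ : (support v₂).ncard ≤ ε := by
    have hsub : support v₂ ⊆ ↑(S \ S₁) := by
      rw [Set.support_indicator, coe_sdiff]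
      exact fun f ⟨hf₁, hf⟩ => ⟨hv hf, hf₁⟩
    exact (ncard_support_le_card_of_subset hsub).trans (by rw [card_sdiff_of_subset hS₁S]; omega)
  -- `v = v₁ + v₂` with `d - v₂` looking, to node `k`, like `0 + v₁`.
  have hsplit : v₁ + v₂ = v := Set.indicator_self_add_compl _ v
  have hsyn : H *ᵥ (d + -v₂) = H *ᵥ (0 + v₁) := by
    rw [zero_add, mulVec_add, mulVec_neg, ← hvd, ← hsplit, mulVec_add]
    abel
  have hX := validEncoder_iff.mp hH k d 0 (-v₂) v₁ (by simpa using hv₂) hv₁ hd hsyn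
  funext f
  by_cases hf : f ∈ X k
  · have h₁₂ := hX hf
    rw [← hsplit]
    simp only [Pi.neg_apply, Pi.add_apply, Pi.zero_apply] at h₁₂ ⊢
    linear_combination -h₁₂
  · exact notMem_support.mp fun hfv => hf (hSX (hv hfv))

theorem ValidEncoder.eq_zero_of_mulVec_single_eq_zero [DecidableEq 𝓕]
    (hH : ValidEncoder F X ε H) (hε : 1 ≤ ε) {k : 𝓚} {f : 𝓕} (hf : f ∈ X k) {c : F}
    (h : H *ᵥ Pi.single f c = 0) : c = 0 := by
  have hw : (support (Pi.single f c)).ncard ≤ ε :=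
    (ncard_support_le_card_of_subset (T := {f}) (by simpa using Pi.support_single_subset)).trans
      (by simpa using hε)
  simpa using validEncoder_iff.mp hH k 0 0 (Pi.single f c) 0 hw (by simp) (Set.eqOn_refl _ _)
    (by simpa using h) hf

theorem ValidEncoder.two_mul_le (hH : ValidEncoder F X ε H) (k : 𝓚) (hk : 2 * ε ≤ (X k).card) :
    2 * ε ≤ l := by
  obtain ⟨S, hSX, hS⟩ := exists_subset_card_eq hk
  exact hS ▸ H.card_le_of_support_subset_of_mulVec_eq_zero S fun u hu h0 =>
    hH.eq_zero_of_mulVec_eq hSX hS.le hu (d := 0) (fun _ _ => rfl) (by simpa using h0)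

theorem ValidEncoder.two_mul_lt (hH : ValidEncoder F X ε H) (hε : 1 ≤ ε)
    (hcov : ∀ f, ∃ k, f ∈ X k) (k : 𝓚) (hk : 2 * ε ≤ (X k).card) {f₀ : 𝓕} (hf₀ : f₀ ∉ X k) :
    2 * ε < l := by
  classical
  obtain ⟨S, hSX, hS⟩ := exists_subset_card_eq hk
  have hf₀S : f₀ ∉ S := fun h => hf₀ (hSX h)
  suffices (insert f₀ S).card ≤ l by rwa [card_insert_of_notMem hf₀S, hS] at this
  refine H.card_le_of_support_subset_of_mulVec_eq_zero _ fun u hu h0 => ?_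
  set e₀ : 𝓕 → F := Pi.single f₀ (u f₀)
  -- `u - e₀` lives on `S`, while `-e₀` vanishes on the cache of `k`.
  have hrest : u - e₀ = 0 := by
    refine hH.eq_zero_of_mulVec_eq hSX hS.le (d := -e₀) (fun f hf₀S' => ?_) (fun f hf => ?_) ?_
    · by_cases hff₀ : f = f₀
      · simp [e₀, hff₀] at hf₀S'
      · have hfu : f ∈ insert f₀ S := hu fun hu0 => hf₀S' (by simp [e₀, hff₀, hu0])
        exact (mem_insert.mp hfu).resolve_left hff₀
    · simp [e₀, show f ≠ f₀ from fun h => hf₀ (h ▸ hf)]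
    · rw [mulVec_sub, mulVec_neg, h0, zero_sub]
  have hu_eq : u = e₀ := sub_eq_zero.mp hrest
  obtain ⟨k', hk'⟩ := hcov f₀
  have hc : u f₀ = 0 := hH.eq_zero_of_mulVec_single_eq_zero hε hk' (by rwa [hu_eq] at h0)
  rw [hu_eq]
  simp only [e₀, hc, Pi.single_zero]

theorem exists_validEncoder_card (X : 𝓚 → Finset 𝓕) (ε : ℕ) :
    ∃ (F : Type) (_ : Field F) (_ : Fintype F) (H : Matrix (Fin (Fintype.card 𝓕)) 𝓕 F),
      ValidEncoder F X ε H := by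
  obtain ⟨F, _, _, H, hH⟩ := exists_matrix_sparse_ker_trivial 𝓕 (Fintype.card 𝓕)
  refine ⟨F, _, _, H, validEncoder_of_injective fun u v huv => sub_eq_zero.mp ?_⟩
  exact hH _ ((Set.ncard_le_card _).trans_eq Nat.card_eq_fintype_card) (by simp [mulVec_sub, huv])

theorem exists_validEncoder_optLen (X : 𝓚 → Finset 𝓕) (ε : ℕ) :
    ∃ (F : Type) (_ : Field F) (_ : Fintype F) (H : Matrix (Fin (optLen X ε)) 𝓕 F),
      ValidEncoder F X ε H :=
  Nat.sInf_mem (s := {l | ∃ (F : Type) (_ : Field F) (_ : Fintype F)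
    (H : Matrix (Fin l) 𝓕 F), ValidEncoder F X ε H}) ⟨_, exists_validEncoder_card X ε⟩

theorem ValidEncoder.optLen_le (hH : ValidEncoder F X ε H) : optLen X ε ≤ l :=
  Nat.sInf_le ⟨F, _, _, H, hH⟩

end ValidEncoder

/-- Assume `ε ≥ 1`, `𝓚` nonempty, `|X k| = Z ≥ 2ε + 1` for every `k`,
and every subfile is cached at some node. Then `ℓ*(X, ε) ≥ 2ε`, with equality iff
`Z = F`. -/
theorem optLen_ge_two_eps {𝓕 𝓚 : Type} [Fintype 𝓕] [Nonempty 𝓚] (X : 𝓚 → Finset 𝓕)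
    (ε Z : ℕ) (hε : 1 ≤ ε) (hZ : ∀ k, (X k).card = Z) (hZ2 : 2 * ε + 1 ≤ Z)
    (hcov : ∀ f : 𝓕, ∃ k, f ∈ X k) :
    2 * ε ≤ optLen X ε ∧ (optLen X ε = 2 * ε ↔ Z = Fintype.card 𝓕) := by
  obtain ⟨k₀⟩ := ‹Nonempty 𝓚›
  have hk₀ : 2 * ε ≤ (X k₀).card := by rw [hZ k₀]; omega
  obtain ⟨F, _, _, H, hH⟩ := exists_validEncoder_optLen X ε
  have hlow := hH.two_mul_le k₀ hk₀
  refine ⟨hlow, fun hopt => ?_, fun hZF => ?_⟩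
  · by_contra hZF
    obtain ⟨f₀, hf₀⟩ : ∃ f₀, f₀ ∉ X k₀ := by
      by_contra! hall
      exact hZF (by rw [← hZ k₀, eq_univ_of_forall hall, card_univ])
    have := hH.two_mul_lt hε hcov k₀ hk₀ hf₀
    omega
  · have hX (k : 𝓚) : X k = univ := eq_univ_of_card _ (by rw [hZ k, hZF])
    obtain ⟨F', _, _, H', hH'⟩ := exists_matrix_sparse_ker_trivial 𝓕 (2 * ε)
    exact le_antisymm (validEncoder_of_eq_univ hX hH').optLen_le hlow
end

section
/- Assume ε ≥ 1, 𝓚 is nonempty, |X_k| = Z for every k ∈ 𝓚 with Z ≥ 2ε + 1, and every subfile index f ∈ 𝓕 belongs to X_k for at least one k ∈ 𝓚. Then (1) if Z = F − 1, the optimal codelength satisfies ℓ*(X,ε) = 2ε + 1, and (2) if Z = F − 2, then ℓ*(X,ε) = 2ε + 2. -/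
open Matrix Finset

/-!
A matrix `H` is a valid encoder exactly when, for every node `k`, no kernel vector `z` of `H`
whose restriction to `X k` has weight at most `2ε` is nonzero on `X k`: two admissible updates
that node `k` cannot tell apart differ by such a vector. Let `d = |𝓕| - Z ≤ 2ε` be the number of
files missing at each node. If `l < 2ε + d`, the columns of `2ε` files of some `X k` together with
the `d` files outside `X k` carry a nonzero kernel vector; the condition forces it to vanish on
`X k`, and then, having weight at most `d ≤ 2ε`, on every `X k'`, hence everywhere since the
caches cover `𝓕`. Conversely, a Vandermonde matrix with `2ε + d` rows and distinct nodes has no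
nonzero kernel vector of weight at most `2ε + d`, and a vector of weight at most `2ε` on `X k` has
weight at most `2ε + d`.
-/

open Function

theorem exists_decoder_iff {α β γ δ : Type*} [Nonempty δ] (P : α → Prop) (g : α → β)
    (s : α → γ) (r : α → δ) :
    (∃ D : β → γ → δ, ∀ a, P a → D (g a) (s a) = r a) ↔
      ∀ a b, P a → P b → g a = g b → s a = s b → r a = r b := by
  constructor
  · rintro ⟨D, hD⟩ a b ha hb hg hs
    rw [← hD a ha, ← hD b hb, hg, hs]
  · intro h
    have hfac : FactorsThrough (fun a : Subtype P => r a) (fun a => (g a, s a)) :=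
      fun a b hab => h a b a.2 b.2 (congrArg Prod.fst hab) (congrArg Prod.snd hab)
    exact ⟨fun y t => extend (fun a : Subtype P => (g a, s a)) (fun a => r a)
      (fun _ => Classical.arbitrary δ) (y, t), fun a ha => hfac.extend_apply _ ⟨a, ha⟩⟩

theorem exists_add_eq_of_ncard_support_le {ι M : Type*} [Finite ι] [AddZeroClass M]
    {v : ι → M} {m n : ℕ} (hv : (support v).ncard ≤ m + n) :
    ∃ a b : ι → M, a + b = v ∧ (support a).ncard ≤ m ∧ (support b).ncard ≤ n := by
  obtain ⟨T, hTv, hT⟩ := Set.exists_subset_card_eq (min_le_right m (support v).ncard)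
  refine ⟨T.indicator v, Tᶜ.indicator v, T.indicator_self_add_compl v, ?_, ?_⟩
  · rw [Set.support_indicator, Set.inter_eq_left.2 hTv, hT]
    exact min_le_left _ _
  · rw [Set.support_indicator, ← Set.sdiff_eq_compl_inter, Set.ncard_sdiff hTv, hT]
    omega

theorem Matrix.exists_ne_zero_mulVec_eq_zero_support_subset {m ι K : Type*} [Fintype m]
    [Fintype ι] [Field K] (H : Matrix m ι K) {S : Set ι} (hS : Fintype.card m < S.ncard) :
    ∃ z ≠ 0, H *ᵥ z = 0 ∧ support z ⊆ S := by
  classical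
  let φ := H.mulVecLin ∘ₗ ExtendByZero.linearMap K (Subtype.val : S → ι)
  have hker : LinearMap.ker φ ≠ ⊥ := LinearMap.ker_ne_bot_of_finrank_lt <| by
    rwa [Module.finrank_fintype_fun_eq_card, Module.finrank_fintype_fun_eq_card,
      ← Nat.card_eq_fintype_card (α := S), Nat.card_coe_set_eq]
  obtain ⟨v, hv, hv0⟩ := (Submodule.ne_bot_iff _).1 hker
  refine ⟨extend Subtype.val v 0, fun h => hv0 (funext fun i => ?_), hv, ?_⟩
  · simpa [Subtype.val_injective.extend_apply] using congrFun h i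
  · exact support_extend_zero_subset.trans (by simp)

theorem Finset.ncard_compl_coe {α : Type*} [Fintype α] (s : Finset α) :
    ((s : Set α)ᶜ).ncard = Fintype.card α - s.card := by
  rw [Set.ncard_compl, Set.ncard_coe_finset, Nat.card_eq_fintype_card]

section CacheUpdate

variable {𝓕 𝓚 F : Type} [Fintype 𝓕] [Field F]

def KernelCondition (X : 𝓚 → Finset 𝓕) (ε : ℕ) {l : ℕ} (H : Matrix (Fin l) 𝓕 F) : Prop :=
  ∀ k, ∀ z : 𝓕 → F, H *ᵥ z = 0 → (support z ∩ X k).ncard ≤ 2 * ε → ∀ f ∈ X k, z f = 0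

theorem validEncoder_iff_forall_eq [Fintype F] {X : 𝓚 → Finset 𝓕} {ε l : ℕ}
    {H : Matrix (Fin l) 𝓕 F} :
    ValidEncoder F X ε H ↔ ∀ k, ∀ w e w' e' : 𝓕 → F, (support e).ncard ≤ ε →
      (support e').ncard ≤ ε → H *ᵥ (w + e) = H *ᵥ (w' + e') → (∀ f ∈ X k, w f = w' f) →
        ∀ f ∈ X k, (w + e) f = (w' + e') f := by
  refine forall_congr' fun k => ?_
  have := exists_decoder_iff (fun we : (𝓕 → F) × (𝓕 → F) => (support we.2).ncard ≤ ε)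
    (fun we => H *ᵥ (we.1 + we.2)) (fun we (f : X k) => we.1 f)
    (fun we (f : X k) => (we.1 + we.2) f)
  simp only [Prod.forall] at this
  refine this.trans ?_
  simp only [funext_iff, Subtype.forall]

theorem validEncoder_iff_kernelCondition [Fintype F] {X : 𝓚 → Finset 𝓕} {ε l : ℕ}
    {H : Matrix (Fin l) 𝓕 F} : ValidEncoder F X ε H ↔ KernelCondition X ε H := by
  rw [validEncoder_iff_forall_eq]
  refine forall_congr' fun k => ⟨fun hdec z hz hwt f hf => ?_,
    fun hker w e w' e' he he' hH hw f hf => ?_⟩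
  · obtain ⟨a, b, hab, ha, hb⟩ := exists_add_eq_of_ncard_support_le (m := ε) (n := ε)
      (v := (X k : Set 𝓕).indicator z) (by rwa [Set.support_indicator, Set.inter_comm, ← two_mul])
    have hz_eq : ∀ g ∈ X k, a g + b g = z g := fun g hg => by
      rw [← Pi.add_apply, hab, Set.indicator_of_mem (Finset.mem_coe.2 hg)]
    -- node `k` cannot tell the update `a` of `0` from the update `-b` of `a + b - z`
    have hsyn : H *ᵥ (0 + a) = H *ᵥ ((a + b - z) + -b) := by
      rw [show a + b - z + -b = a - z by abel, Matrix.mulVec_sub, hz, sub_zero, zero_add]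
    have := hdec 0 a (a + b - z) (-b) ha (by rwa [support_neg]) hsyn
      (fun g hg => by simp [hz_eq g hg]) f hf
    simp only [Pi.add_apply, Pi.zero_apply, Pi.sub_apply, Pi.neg_apply] at this
    linear_combination this
  · have hz : H *ᵥ ((w + e) - (w' + e')) = 0 := by rw [Matrix.mulVec_sub, hH, sub_self]
    have hsupp : support ((w + e) - (w' + e')) ∩ X k ⊆ support e ∪ support e' := by
      rintro g ⟨hg, hgX⟩
      by_contra hee'
      simp only [Set.mem_union, mem_support, not_or, not_not] at hee'
      simp [hee'.1, hee'.2, hw g hgX] at hg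
    have hwt := (Set.ncard_le_ncard hsupp).trans (Set.ncard_union_le _ _)
    exact sub_eq_zero.1 (hker _ hz (by omega) f hf)

theorem KernelCondition.eq_zero {X : 𝓚 → Finset 𝓕} {ε l : ℕ} {H : Matrix (Fin l) 𝓕 F}
    (hH : KernelCondition X ε H) (hcov : ∀ f, ∃ k, f ∈ X k) {z : 𝓕 → F} (hz : H *ᵥ z = 0)
    (hwt : (support z).ncard ≤ 2 * ε) : z = 0 := by
  funext f
  obtain ⟨k, hk⟩ := hcov f
  exact hH k z hz ((Set.ncard_le_ncard Set.inter_subset_left).trans hwt) f hk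

theorem KernelCondition.le_length {X : 𝓚 → Finset 𝓕} {ε l d : ℕ} {H : Matrix (Fin l) 𝓕 F}
    (hH : KernelCondition X ε H) (hcov : ∀ f, ∃ k, f ∈ X k) {k : 𝓚}
    (hk : 2 * ε ≤ (X k).card) (hd : (X k).card + d = Fintype.card 𝓕) (hdε : d ≤ 2 * ε) :
    2 * ε + d ≤ l := by
  by_contra! hl
  obtain ⟨S, hSX, hS⟩ := Set.exists_subset_card_eq (s := (X k : Set 𝓕)) (n := 2 * ε)
    (by rwa [Set.ncard_coe_finset])
  have hcompl : ((X k : Set 𝓕)ᶜ).ncard = d := by rw [Finset.ncard_compl_coe]; omega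
  obtain ⟨z, hz0, hz, hzS⟩ := H.exists_ne_zero_mulVec_eq_zero_support_subset
    (S := S ∪ (X k : Set 𝓕)ᶜ) (by
      rwa [Set.ncard_union_eq (Set.disjoint_compl_right_iff_subset.2 hSX), hS, hcompl,
        Fintype.card_fin])
  have hzX : ∀ f ∈ X k, z f = 0 := hH k z hz <| by
    refine (Set.ncard_le_ncard fun f hf => ?_).trans hS.le
    exact (hzS hf.1).resolve_right (not_not.2 hf.2)
  have hzc : support z ⊆ (X k : Set 𝓕)ᶜ := fun f hf hfX => hf (hzX f hfX)
  exact hz0 (hH.eq_zero hcov hz ((Set.ncard_le_ncard hzc).trans (hcompl.trans_le hdε)))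

theorem vandermonde_sum_mul_eval_eq_zero {ι K : Type*} [Fintype ι] [Field K] {l : ℕ}
    {x : ι → K} {z : ι → K} (hz : (Matrix.of fun (i : Fin l) j => x j ^ (i : ℕ)) *ᵥ z = 0)
    {p : Polynomial K} (hp : p.natDegree < l) : ∑ j, z j * p.eval (x j) = 0 := by
  simp_rw [Polynomial.eval_eq_sum_range' hp, Finset.mul_sum]
  rw [Finset.sum_comm]
  refine Finset.sum_eq_zero fun i hi => ?_
  have := congrFun hz ⟨i, Finset.mem_range.1 hi⟩
  simp only [Matrix.mulVec, dotProduct, Matrix.of_apply, Pi.zero_apply] at this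
  rw [← mul_zero (p.coeff i), ← this, Finset.mul_sum]
  exact Finset.sum_congr rfl fun j _ => by ring

theorem vandermonde_mulVec_eq_zero {ι K : Type*} [Fintype ι] [Field K] {l : ℕ}
    {x : ι → K} (hx : Injective x) {z : ι → K}
    (hz : (Matrix.of fun (i : Fin l) j => x j ^ (i : ℕ)) *ᵥ z = 0)
    (hwt : (support z).ncard ≤ l) : z = 0 := by
  classical
  by_contra! hz0
  obtain ⟨j₀, hj₀⟩ := Function.ne_iff.1 hz0
  set s := (support z).toFinset
  have hj₀s : j₀ ∈ s := by simpa [s] using hj₀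
  have hdeg : (Lagrange.basis s x j₀).natDegree < l := by
    have hs : s.card ≤ l := by simpa [s, Set.ncard_eq_toFinset_card'] using hwt
    have := Finset.card_pos.2 ⟨j₀, hj₀s⟩
    rw [Lagrange.natDegree_basis hx.injOn hj₀s]
    omega
  have := vandermonde_sum_mul_eval_eq_zero hz hdeg
  rw [Finset.sum_eq_single j₀ (fun j _ hj => ?_) (by simp), Lagrange.eval_basis_self hx.injOn hj₀s,
    mul_one] at this
  · exact hj₀ this
  · by_cases hjs : j ∈ s
    · rw [Lagrange.eval_basis_of_ne (Ne.symm hj) hjs, mul_zero]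
    · rw [show z j = 0 by simpa [s] using hjs, zero_mul]

theorem kernelCondition_vandermonde {X : 𝓚 → Finset 𝓕} {ε d : ℕ} {x : 𝓕 → F}
    (hx : Injective x) (hX : ∀ k, Fintype.card 𝓕 ≤ (X k).card + d) :
    KernelCondition X ε (Matrix.of fun (i : Fin (2 * ε + d)) f => x f ^ (i : ℕ)) := by
  intro k z hz hwt
  have hcompl : (support z \ X k).ncard ≤ d :=
    (Set.ncard_le_ncard (Set.sdiff_subset_compl _ _)).trans <| by
      rw [Finset.ncard_compl_coe]; have := hX k; omega
  have hz0 : z = 0 := vandermonde_mulVec_eq_zero hx hz <| by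
    rw [← Set.ncard_inter_add_ncard_sdiff_eq_ncard (support z) (X k)]
    omega
  simp [hz0]

end CacheUpdate

theorem exists_finite_field_embedding (α : Type) [Fintype α] :
    ∃ (K : Type) (_ : Field K) (_ : Fintype K), Nonempty (α ↪ K) := by
  obtain ⟨p, hp, hprime⟩ := Nat.exists_infinite_primes (Fintype.card α)
  have : Fact p.Prime := ⟨hprime⟩
  exact ⟨ZMod p, inferInstance, inferInstance,
    Function.Embedding.nonempty_of_card_le (by rwa [ZMod.card])⟩

theorem optLen_eq_two_mul_add {𝓕 𝓚 : Type} [Fintype 𝓕] [Nonempty 𝓚] {X : 𝓚 → Finset 𝓕}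
    {ε d : ℕ} (hdε : d ≤ 2 * ε) (hX : ∀ k, (X k).card + d = Fintype.card 𝓕)
    (hXε : ∀ k, 2 * ε ≤ (X k).card) (hcov : ∀ f, ∃ k, f ∈ X k) :
    optLen X ε = 2 * ε + d := by
  refine IsLeast.csInf_eq ⟨?_, ?_⟩
  · obtain ⟨K, _, _, ⟨x⟩⟩ := exists_finite_field_embedding 𝓕
    exact ⟨K, _, _, _, validEncoder_iff_kernelCondition.2
      (kernelCondition_vandermonde x.injective fun k => (hX k).ge)⟩
  · rintro l ⟨K, _, _, H, hH⟩
    obtain ⟨k⟩ := ‹Nonempty 𝓚›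
    exact (validEncoder_iff_kernelCondition.1 hH).le_length hcov (hXε k) (hX k) hdε

/-- Assume `ε ≥ 1`, `𝓚` nonempty, `|X k| = Z ≥ 2ε + 1` for every `k`,
and every subfile is cached at some node. Then (1) if `Z = F − 1` then
`ℓ*(X, ε) = 2ε + 1`, and (2) if `Z = F − 2` then `ℓ*(X, ε) = 2ε + 2`. -/
theorem optLen_near_two_eps {𝓕 𝓚 : Type} [Fintype 𝓕] [Nonempty 𝓚] (X : 𝓚 → Finset 𝓕)
    (ε Z : ℕ) (hε : 1 ≤ ε) (hZ : ∀ k, (X k).card = Z) (hZ2 : 2 * ε + 1 ≤ Z)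
    (hcov : ∀ f : 𝓕, ∃ k, f ∈ X k) :
    (Z + 1 = Fintype.card 𝓕 → optLen X ε = 2 * ε + 1) ∧
      (Z + 2 = Fintype.card 𝓕 → optLen X ε = 2 * ε + 2) := by
  have hXε : ∀ k, 2 * ε ≤ (X k).card := fun k => by rw [hZ k]; omega
  refine ⟨fun hF => ?_, fun hF => ?_⟩ <;>
    exact optLen_eq_two_mul_add (by omega) (fun k => by rw [hZ k, hF]) hXε hcov
end

section
/- For the Shangguan et al. Construction-I placement with parameters n, a, b (positive integers, a + b ≤ n), if ε ≥ 1 and Z = C(n,a) − C(n−b,a) ≥ 2ε + 1, then ℓ*(X,ε) ≥ 2ε + Σ_{j=0}^{n−b−1} min{ 2ε, C(j, a−1) }. -/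
/-!
A valid encoder `H` has no nonzero kernel vector `z` with at most `2ε` nonzero entries inside a
cache `X k`: splitting those entries into two updates of weight `≤ ε` gives two scenarios with the
same codeword and the same side information at `k` but different cache contents.

Hence, if blocks of subfiles `T₀, …, Tₘ` of size `≤ 2ε` are attached to nodes `k₀, …, kₘ` with
`Tᵢ ⊆ X kᵢ` and `Tᵢ` disjoint from `X kⱼ` for `i < j`, downward induction on `i` shows that every
kernel vector supported on `⋃ Tᵢ` vanishes. The columns of `H` indexed by `⋃ Tᵢ` are then
independent, so `l ≥ ∑ |Tᵢ|`.

For Construction I take `kᵢ = {i, …, i + b - 1}`, let `Tᵢ` (`i < n - b`) be `min(2ε, C(i, a-1))`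
subfiles with largest element `i`, and let `T_{n-b}` be `2ε` subfiles meeting `k_{n-b}`, which exist
because `Z ≥ 2ε`.
-/
open Matrix Finset

theorem ncard_support_piecewise_le {α M : Type*} [Zero M] [DecidableEq α] (S : Finset α)
    (g : α → M) :
    {f | S.piecewise g 0 f ≠ 0}.ncard ≤ #S := by
  rw [← Set.ncard_coe_finset]
  refine Set.ncard_le_ncard (fun f hf => ?_) S.finite_toSet
  by_contra h
  simp_all

theorem Matrix.card_le_of_supported_ker_trivial {m ι F : Type*} [Fintype m] [Fintype ι] [Field F]
    (H : Matrix m ι F) (T : Finset ι)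
    (hker : ∀ z : ι → F, H *ᵥ z = 0 → (∀ i ∉ T, z i = 0) → z = 0) :
    #T ≤ Fintype.card m := by
  let L := H.mulVecLin ∘ₗ Function.ExtendByZero.linearMap F ((↑) : T → ι)
  have hL : Function.Injective L := by
    rw [← LinearMap.ker_eq_bot, LinearMap.ker_eq_bot']
    intro v hv
    have hz := hker _ hv fun i hi => by
      simp [Function.extend, hi]
    funext t
    simpa [Subtype.val_injective.extend_apply] using congrFun hz t
  simpa using LinearMap.finrank_le_finrank_of_injective hL

structure StaircaseFamily {𝓕 𝓚 : Type} (X : 𝓚 → Finset 𝓕) (ε : ℕ) (ι : Type*) [LinearOrder ι] where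
  node : ι → 𝓚
  block : ι → Finset 𝓕
  block_subset : ∀ i, block i ⊆ X (node i)
  card_block_le : ∀ i, #(block i) ≤ 2 * ε
  disjoint_block : ∀ i j, i < j → Disjoint (block i) (X (node j))

section Encoder

variable {𝓕 𝓚 : Type} [Fintype 𝓕] {F : Type} [Field F] [Fintype F]
  {X : 𝓚 → Finset 𝓕} {ε l : ℕ} {H : Matrix (Fin l) 𝓕 F}

theorem ValidEncoder.eq_zero_on_of_mulVec_eq_zero (hH : ValidEncoder F X ε H) (k : 𝓚)
    {z : 𝓕 → F} (hz : H *ᵥ z = 0) (S : Finset 𝓕) (hcard : #S ≤ 2 * ε)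
    (hS : ∀ f ∈ X k, z f ≠ 0 → f ∈ S) : ∀ f ∈ X k, z f = 0 := by
  classical
  obtain ⟨S₁, hS₁, hcard₁⟩ := S.exists_subset_card_eq (min_le_right ε #S)
  have hcard₂ : #(S \ S₁) ≤ ε := by
    rw [card_sdiff_of_subset hS₁]
    omega
  let e₁ := S₁.piecewise z 0
  let e₂ := (S \ S₁).piecewise (-z) 0
  -- `z = e₁ - e₂` on `X k`, so the updates `e₁` of `z - e₁` and `e₂` of `-e₂` share side information
  have hside : (fun f : {f // f ∈ X k} => (z - e₁) f.1) = fun f => (-e₂) f.1 := by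
    funext ⟨f, hf⟩
    by_cases h₁ : f ∈ S₁ <;> by_cases h : f ∈ S <;> simp_all [e₁, e₂]
    exact not_not.1 fun h' => h (hS f hf h')
  obtain ⟨D, hD⟩ := hH k
  have h₁ := hD (z - e₁) e₁ (by grw [ncard_support_piecewise_le]; omega)
  have h₂ := hD (-e₂) e₂ (by grw [ncard_support_piecewise_le]; exact hcard₂)
  rw [sub_add_cancel, hz, hside] at h₁
  rw [neg_add_cancel, mulVec_zero, h₁] at h₂
  exact fun f hf => by simpa using congrFun h₂ ⟨f, hf⟩

theorem ValidEncoder.sum_card_block_le {ι : Type*} [Fintype ι] [LinearOrder ι]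
    (hH : ValidEncoder F X ε H) (B : StaircaseFamily X ε ι) : ∑ i, #(B.block i) ≤ l := by
  classical
  have hpair : ((univ : Finset ι) : Set ι).PairwiseDisjoint B.block := by
    intro i _ j _ hij
    rcases hij.lt_or_gt with h | h
    · exact (B.disjoint_block i j h).mono_right (B.block_subset j)
    · exact ((B.disjoint_block j i h).mono_right (B.block_subset i)).symm
  rw [← card_biUnion hpair]
  simpa using H.card_le_of_supported_ker_trivial _ fun z hz hsupp => by
    -- downward induction: blocks above `i` are already known to vanish, blocks below miss `X (node i)`
    have hnode : ∀ i, ∀ f ∈ X (B.node i), z f = 0 := by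
      intro i
      induction i using WellFoundedGT.induction with
      | _ i ih =>
        refine hH.eq_zero_on_of_mulVec_eq_zero (B.node i) hz (B.block i) (B.card_block_le i)
          fun f hf hzf => ?_
        obtain ⟨j, -, hfj⟩ := mem_biUnion.1 (not_not.1 fun h => hzf (hsupp f h))
        rcases lt_trichotomy j i with h | rfl | h
        · exact absurd hf (disjoint_left.1 (B.disjoint_block j i h) hfj)
        · exact hfj
        · exact absurd (ih j h f (B.block_subset j hfj)) hzf
    funext f
    by_cases hf : f ∈ univ.biUnion B.block
    · obtain ⟨i, -, hfi⟩ := mem_biUnion.1 hf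
      exact hnode i f (B.block_subset i hfi)
    · exact hsupp f hf

theorem validEncoder_identity [DecidableEq 𝓕] (X : 𝓚 → Finset 𝓕) (ε : ℕ) :
    ValidEncoder F X ε ((1 : Matrix 𝓕 𝓕 F).submatrix (Fintype.equivFin 𝓕).symm id) :=
  fun _ => ⟨fun y _ f => y (Fintype.equivFin 𝓕 f.1), fun w e _ => by
    funext f
    simp [mulVec, dotProduct, one_apply]⟩

theorem le_optLen {N : ℕ}
    (h : ∀ (F : Type) [Field F] [Fintype F] (l : ℕ) (H : Matrix (Fin l) 𝓕 F),
      ValidEncoder F X ε H → N ≤ l) :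
    N ≤ optLen X ε := by
  classical
  exact le_csInf ⟨_, ZMod 2, inferInstance, inferInstance, _, validEncoder_identity X ε⟩
    fun _ ⟨F, _, _, H, hH⟩ => h F _ H hH

end Encoder

section Subsets

variable {α : Type*} [Fintype α] {a : ℕ}

theorem choose_sub_choose_le_card_filter_inter_nonempty [DecidableEq α] (s : Finset α) :
    (Fintype.card α).choose a - (Fintype.card α - #s).choose a ≤
      #(univ.filter fun f : {t : Finset α // #t = a} => (f.1 ∩ s).Nonempty) := by
  have hmiss : #(univ.filter fun f : {t : Finset α // #t = a} => ¬(f.1 ∩ s).Nonempty) ≤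
      (Fintype.card α - #s).choose a := by
    rw [← card_compl, ← card_powersetCard]
    refine card_le_card_of_injOn Subtype.val (fun f hf => ?_) Subtype.val_injective.injOn
    simp only [coe_filter, mem_univ, true_and, Set.mem_ofPred_eq, not_nonempty_iff_eq_empty] at hf
    simp [mem_powersetCard, f.2, subset_compl_iff_disjoint_right, disjoint_iff_inter_eq_empty, hf]
  have htotal := card_filter_add_card_filter_not (s := (univ : Finset {t : Finset α // #t = a}))
    fun f => (f.1 ∩ s).Nonempty
  rw [card_univ, Fintype.card_finset_len] at htotal
  omega

theorem choose_card_Iio_le_card_filter_greatest [LinearOrder α]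
    [LocallyFiniteOrderBot α] (j : α) (ha : 0 < a) :
    (#(Iio j)).choose (a - 1) ≤
      #(univ.filter fun f : {t : Finset α // #t = a} => j ∈ f.1 ∧ ∀ x ∈ f.1, x ≤ j) := by
  have hj : ∀ g ∈ powersetCard (a - 1) (Iio j), j ∉ g := fun g hg hjg => by
    simpa using (mem_powersetCard.1 hg).1 hjg
  calc (#(Iio j)).choose (a - 1) = #((powersetCard (a - 1) (Iio j)).image (insert j)) := by
        rw [card_image_of_injOn, card_powersetCard]
        intro g hg g' hg' h
        rw [← erase_insert (hj g hg), h, erase_insert (hj g' hg')]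
    _ ≤ _ := by
        refine card_le_card_of_surjOn Subtype.val fun t ht => ?_
        obtain ⟨g, hg, rfl⟩ := mem_image.1 ht
        have hcard : #(insert j g) = a := by
          rw [card_insert_of_notMem (hj g hg), (mem_powersetCard.1 hg).2]
          omega
        refine ⟨⟨insert j g, hcard⟩, ?_, rfl⟩
        have hlt := (mem_powersetCard.1 hg).1
        simp only [coe_filter, mem_univ, true_and, Set.mem_ofPred_eq]
        refine ⟨mem_insert_self j g, fun x hx => ?_⟩
        rcases mem_insert.1 hx with rfl | hx
        · exact le_rfl
        · exact (mem_Iio.1 (hlt hx)).le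

end Subsets

def window (n b j : ℕ) : Finset (Fin n) := univ.filter fun x => j ≤ x.1 ∧ x.1 < j + b

theorem mem_window {n b j : ℕ} {x : Fin n} : x ∈ window n b j ↔ j ≤ x.1 ∧ x.1 < j + b := by
  simp [window]

theorem card_window {n b j : ℕ} (h : j + b ≤ n) : #(window n b j) = b := by
  have : (window n b j).map Fin.valEmbedding = Ico j (j + b) := by
    ext x
    simp only [mem_map, mem_window, Fin.valEmbedding_apply, mem_Ico]
    exact ⟨fun ⟨y, hy, hyx⟩ => hyx ▸ hy, fun hx => ⟨⟨x, by omega⟩, hx, rfl⟩⟩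
  rw [← card_map, this, Nat.card_Ico, Nat.add_sub_cancel_left]

def placement (n a b : ℕ) :
    {s : Finset (Fin n) // #s = b} → Finset {s : Finset (Fin n) // #s = a} :=
  fun k => univ.filter fun f => (f.1 ∩ k.1).Nonempty

theorem exists_staircaseFamily_placement {n a b ε : ℕ} (ha : 0 < a) (hb : 0 < b) (hbn : b ≤ n)
    (hZ : 2 * ε ≤ n.choose a - (n - b).choose a) :
    ∃ B : StaircaseFamily (placement n a b) ε (Fin (n - b + 1)),
      ∑ i, #(B.block i) = 2 * ε + ∑ j ∈ range (n - b), min (2 * ε) (j.choose (a - 1)) := by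
  set m := n - b
  let node (i : Fin (m + 1)) : {s : Finset (Fin n) // #s = b} :=
    ⟨window n b i, card_window (by omega)⟩
  have htop_count : 2 * ε ≤ #(placement n a b (node (Fin.last m))) := by
    have := choose_sub_choose_le_card_filter_inter_nonempty (a := a) (window n b m)
    rw [Fintype.card_fin, card_window (by omega)] at this
    exact hZ.trans this
  obtain ⟨top, htop, htop_card⟩ := exists_subset_card_eq htop_count
  have hlow_count (j : Fin m) := (min_le_right (2 * ε) _).trans <|
    Fin.card_Iio _ ▸ choose_card_Iio_le_card_filter_greatest (Fin.castLE (show m ≤ n by omega) j) ha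
  choose low hlow_sub hlow_card using fun j => exists_subset_card_eq (hlow_count j)
  have hlow_max (j : Fin m) (f) (hf : f ∈ low j) :
      Fin.castLE (show m ≤ n by omega) j ∈ f.1 ∧ ∀ x ∈ f.1, x.1 ≤ j := by
    simpa [Fin.le_def] using hlow_sub j hf
  refine ⟨⟨node, Fin.lastCases top low, fun i => ?_, fun i => ?_, fun i j hij => ?_⟩, ?_⟩
  · induction i using Fin.lastCases with
    | last => simpa using htop
    | cast j =>
      intro f hf
      rw [Fin.lastCases_castSucc] at hf
      refine mem_filter.2 ⟨mem_univ _, _, mem_inter.2 ⟨(hlow_max j f hf).1, ?_⟩⟩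
      simp [node, mem_window, hb]
  · induction i using Fin.lastCases with
    | last => simp [htop_card]
    | cast j => simp [hlow_card]
  · induction i using Fin.lastCases with
    | last => exact absurd hij (not_lt.2 (Fin.le_last j))
    | cast i =>
      rw [Fin.lastCases_castSucc, disjoint_left]
      intro f hf hfj
      obtain ⟨x, hx⟩ := (mem_filter.1 hfj).2
      simp only [mem_inter, node, mem_window] at hx
      have := (hlow_max i f hf).2 x hx.1
      rw [Fin.lt_def, Fin.val_castSucc] at hij
      omega
  · simp only [Fin.sum_univ_castSucc, Fin.lastCases_last, Fin.lastCases_castSucc, htop_card,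
      hlow_card, Fin.val_castLE, Fin.sum_univ_eq_sum_range fun j => min (2 * ε) (j.choose (a - 1))]
    exact add_comm _ _

theorem shangguan_lower_bound_general (n a b : ℕ) (ha : 0 < a) (hb : 0 < b) (hab : a + b ≤ n)
    (ε : ℕ)
    (hZ : 2 * ε + 1 ≤ Nat.choose n a - Nat.choose (n - b) a) :
    2 * ε + ∑ j ∈ Finset.range (n - b), min (2 * ε) (Nat.choose j (a - 1)) ≤
      optLen (fun k : {s : Finset (Fin n) // s.card = b} =>
        Finset.univ.filter (fun f : {s : Finset (Fin n) // s.card = a} =>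
          (f.1 ∩ k.1).Nonempty)) ε := by
  obtain ⟨B, hB⟩ := exists_staircaseFamily_placement (n := n) (ε := ε) ha hb (by omega) (by omega)
  exact le_optLen fun F _ _ l H hH => hB ▸ hH.sum_card_block_le B

/-- For the Shangguan et al. Construction-I placement with parameters
`n, a, b` (subfiles: `a`-subsets of `{1,…,n}`, nodes: `b`-subsets, `f ∈ X k ↔ f ∩ k ≠ ∅`),
if `ε ≥ 1` and `Z = C(n,a) − C(n−b,a) ≥ 2ε + 1`, then
`ℓ*(X, ε) ≥ 2ε + ∑_{j=0}^{n−b−1} min{2ε, C(j, a−1)}`. -/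
theorem shangguan_lower_bound (n a b : ℕ) (ha : 0 < a) (hb : 0 < b) (hab : a + b ≤ n)
    (ε : ℕ) (hε : 1 ≤ ε)
    (hZ : 2 * ε + 1 ≤ Nat.choose n a - Nat.choose (n - b) a) :
    2 * ε + ∑ j ∈ Finset.range (n - b), min (2 * ε) (Nat.choose j (a - 1)) ≤
      optLen (fun k : {s : Finset (Fin n) // s.card = b} =>
        Finset.univ.filter (fun f : {s : Finset (Fin n) // s.card = a} =>
          (f.1 ∩ k.1).Nonempty)) ε :=
  shangguan_lower_bound_general n a b ha hb hab ε hZ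
end
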